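/- Let m and B be positive integers and let e₁, …, e_{3m} be positive integers such that B < 4·eᵢ and 2·eᵢ < B for every i, and Σᵢ eᵢ = m·B. Over the alphabet {a, b}, let sᵢ = a^{eᵢ} b^{eᵢ} for each i. Then ⧢(s₁, …, s_{3m}) ∩ (a^B b^B)^* ≠ ∅ if and only if the index set {1, …, 3m} can be partitioned into m sets of size 3, each of which has element-sum Σ_{i ∈ T} eᵢ = B. -/

import Mathlib

/-
In a shuffle of the blocks `a^eᵢ b^eᵢ` equal to `(a^B b^B)^n`, look at how the first factor
`a^B b^B` is distributed among the blocks: each block contributes a prefix `a^p b^q` with `q ≤ p`,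
and the factor has as many `b`s as `a`s, so every contribution is empty or a whole block. Hence the
blocks can be labelled by the factor that consumes them, each label having weight `B`; conversely
such a labelling rebuilds the shuffle factor by factor. Since `B/4 < eᵢ < B/2`, every label class
has exactly three elements, and comparing total weights gives `n = m`.
-/

namespace CTS

/-- Shuffle of two words: `ε ⧢ v = {v}`, `u ⧢ ε = {u}`,
`(x·u) ⧢ (y·v) = x·(u ⧢ y·v) ∪ y·(x·u ⧢ v)`. -/
def shuffle {α : Type*} : List α → List α → Set (List α)
  | [], v => {v}
  | u, [] => {u}
  | x :: u, y :: v =>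
      (List.cons x) '' shuffle u (y :: v) ∪ (List.cons y) '' shuffle (x :: u) v
  termination_by u v => u.length + v.length

/-- Shuffle of a tuple of words: `⧢() = {ε}` and
`⧢(w₁, …, wₘ₊₁) = ⋃_{v ∈ ⧢(w₁, …, wₘ)} v ⧢ wₘ₊₁`. -/
def Shuffles {α : Type*} (ws : List (List α)) : Set (List α) :=
  ws.foldl (fun S w => ⋃ v ∈ S, shuffle v w) {[]}

/-- `wpow u n` is the `n`-fold concatenation `u^n` of the word `u`. -/
def wpow {α : Type*} (u : List α) : ℕ → List α
  | 0 => []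
  | n + 1 => u ++ wpow u n

/-- `star u = {u^n : n ∈ ℕ}`. -/
def star {α : Type*} (u : List α) : Set (List α) := {w | ∃ n, w = wpow u n}

/-- Words that are (possibly empty) concatenations of blocks from `S`. -/
def ConcatsOf {α : Type*} (S : Set (List α)) : Set (List α) :=
  {w | ∃ L : List (List α), (∀ u ∈ L, u ∈ S) ∧ w = L.flatten}

/-- The two-letter alphabet `{a, b}`. -/
inductive AB : Type
  | a : AB
  | b : AB
deriving DecidableEq

variable {α : Type*}

inductive Interleaving : List α → List α → List α → Prop
  | nil : Interleaving [] [] []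
  | left {x u v w} : Interleaving u v w → Interleaving (x :: u) v (x :: w)
  | right {y u v w} : Interleaving u v w → Interleaving u (y :: v) (y :: w)

namespace Interleaving

theorem nil_left : ∀ v : List α, Interleaving [] v v
  | [] => nil
  | _ :: v => right (nil_left v)

theorem nil_right : ∀ u : List α, Interleaving u [] u
  | [] => nil
  | _ :: u => left (nil_right u)

theorem append_left_right : ∀ u v : List α, Interleaving u v (u ++ v)
  | [], v => nil_left v
  | _ :: u, v => left (append_left_right u v)

theorem append {u₁ v₁ w₁ u₂ v₂ w₂ : List α} (h₁ : Interleaving u₁ v₁ w₁)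
    (h₂ : Interleaving u₂ v₂ w₂) : Interleaving (u₁ ++ u₂) (v₁ ++ v₂) (w₁ ++ w₂) := by
  induction h₁ with
  | nil => exact h₂
  | left _ ih => exact left ih
  | right _ ih => exact right ih

theorem perm {u v w : List α} (h : Interleaving u v w) : w.Perm (u ++ v) := by
  induction h with
  | nil => rfl
  | left _ ih => exact ih.cons _
  | right _ ih => exact (ih.cons _).trans List.perm_middle.symm

theorem exists_split_of_append {u v : List α} :
    ∀ {w₁ w₂ : List α}, Interleaving u v (w₁ ++ w₂) →
      ∃ u₁ u₂ v₁ v₂, u = u₁ ++ u₂ ∧ v = v₁ ++ v₂ ∧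
        Interleaving u₁ v₁ w₁ ∧ Interleaving u₂ v₂ w₂
  | [], _, h => ⟨[], u, [], v, rfl, rfl, nil, h⟩
  | _ :: _, _, left h =>
    let ⟨u₁, u₂, v₁, v₂, hu, hv, h₁, h₂⟩ := exists_split_of_append h
    ⟨_ :: u₁, u₂, v₁, v₂, by rw [hu]; rfl, hv, left h₁, h₂⟩
  | _ :: _, _, right h =>
    let ⟨u₁, u₂, v₁, v₂, hu, hv, h₁, h₂⟩ := exists_split_of_append h
    ⟨u₁, u₂, _ :: v₁, v₂, hu, by rw [hv]; rfl, right h₁, h₂⟩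

theorem nil_left_iff : ∀ {v w : List α}, Interleaving [] v w ↔ w = v
  | _, [] => ⟨fun h => by cases h; rfl, fun h => h ▸ nil⟩
  | _, _ :: _ => ⟨fun h => by cases h with | right h => rw [nil_left_iff.1 h],
    fun h => h ▸ nil_left _⟩

theorem nil_right_iff : ∀ {u w : List α}, Interleaving u [] w ↔ w = u
  | _, [] => ⟨fun h => by cases h; rfl, fun h => h ▸ nil⟩
  | _, _ :: _ => ⟨fun h => by cases h with | left h => rw [nil_right_iff.1 h],
    fun h => h ▸ nil_right _⟩

theorem cons_cons_iff {x y : α} {u v w : List α} :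
    Interleaving (x :: u) (y :: v) w ↔
      (∃ w', w = x :: w' ∧ Interleaving u (y :: v) w') ∨
        ∃ w', w = y :: w' ∧ Interleaving (x :: u) v w' := by
  constructor
  · intro h
    cases h with
    | left h => exact Or.inl ⟨_, rfl, h⟩
    | right h => exact Or.inr ⟨_, rfl, h⟩
  · rintro (⟨w', rfl, h⟩ | ⟨w', rfl, h⟩)
    exacts [left h, right h]

end Interleaving

theorem mem_shuffle_iff {u v w : List α} : w ∈ shuffle u v ↔ Interleaving u v w := by
  induction u, v using shuffle.induct generalizing w with
  | case1 v => simp [shuffle, Interleaving.nil_left_iff]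
  | case2 u hu =>
    cases u
    · exact absurd rfl hu
    · simp [shuffle, Interleaving.nil_right_iff]
  | case3 x u y v ihu ihv =>
    simp only [shuffle, Interleaving.cons_cons_iff, Set.mem_union, Set.mem_image, ← ihu, ← ihv]
    grind

theorem mem_shuffles_ofFn_zero {f : Fin 0 → List α} {w : List α} :
    w ∈ Shuffles (List.ofFn f) ↔ w = [] := by
  simp [Shuffles]

theorem mem_shuffles_ofFn_succ {n : ℕ} {f : Fin (n + 1) → List α} {w : List α} :
    w ∈ Shuffles (List.ofFn f) ↔
      ∃ v ∈ Shuffles (List.ofFn fun i => f i.castSucc), Interleaving v (f (Fin.last n)) w := by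
  rw [List.ofFn_succ', List.concat_eq_append, Shuffles, List.foldl_append]
  simp only [List.foldl_cons, List.foldl_nil, Set.mem_iUnion, exists_prop, mem_shuffle_iff]
  rfl

theorem count_eq_sum_of_mem_shuffles [DecidableEq α] (x : α) :
    ∀ {n : ℕ} {f : Fin n → List α} {w : List α}, w ∈ Shuffles (List.ofFn f) →
      w.count x = ∑ i, (f i).count x
  | 0, _, _, h => by simp [mem_shuffles_ofFn_zero.1 h]
  | _ + 1, _, _, h => by
    obtain ⟨v, hv, hw⟩ := mem_shuffles_ofFn_succ.1 h
    rw [hw.perm.count_eq, List.count_append, count_eq_sum_of_mem_shuffles x hv,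
      Fin.sum_univ_castSucc]

theorem append_mem_shuffles_ofFn_iff :
    ∀ {n : ℕ} {f : Fin n → List α} {u v : List α},
      u ++ v ∈ Shuffles (List.ofFn f) ↔
        ∃ p s : Fin n → List α, (∀ i, p i ++ s i = f i) ∧
          u ∈ Shuffles (List.ofFn p) ∧ v ∈ Shuffles (List.ofFn s)
  | 0, _, _, _ => by simp [Shuffles]
  | n + 1, f, u, v => by
    constructor
    · intro h
      obtain ⟨w, hw, huv⟩ := mem_shuffles_ofFn_succ.1 h
      obtain ⟨w₁, w₂, x₁, x₂, rfl, hx, hu, hv⟩ := huv.exists_split_of_append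
      obtain ⟨p, s, hps, hp, hs⟩ := append_mem_shuffles_ofFn_iff.1 hw
      refine ⟨Fin.snoc p x₁, Fin.snoc s x₂, Fin.lastCases ?_ fun i => ?_,
        mem_shuffles_ofFn_succ.2 ⟨w₁, ?_, ?_⟩, mem_shuffles_ofFn_succ.2 ⟨w₂, ?_, ?_⟩⟩ <;>
        simp_all
    · rintro ⟨p, s, hps, hp, hs⟩
      obtain ⟨u', hu', hu⟩ := mem_shuffles_ofFn_succ.1 hp
      obtain ⟨v', hv', hv⟩ := mem_shuffles_ofFn_succ.1 hs
      refine mem_shuffles_ofFn_succ.2 ⟨u' ++ v',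
        append_mem_shuffles_ofFn_iff.2 ⟨_, _, fun i => hps i.castSucc, hu', hv'⟩, ?_⟩
      rw [← hps]
      exact hu.append hv

theorem wpow_eq_flatten_replicate (u : List α) : ∀ n, wpow u n = (List.replicate n u).flatten
  | 0 => rfl
  | n + 1 => by rw [wpow, wpow_eq_flatten_replicate u n, List.replicate_succ, List.flatten_cons]

theorem getD_replicate_eq_ite (n k : ℕ) (a d : α) :
    (List.replicate n a).getD k d = if k < n then a else d := by
  rw [List.getD_eq_getElem?_getD, List.getElem?_replicate]
  split_ifs <;> rfl

section labelling

variable {ι : Type*} [Fintype ι] {e : ι → ℕ} {B : ℕ}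

theorem le_sum_fiber {κ : Type*} [DecidableEq κ] (e : ι → ℕ) (g : ι → κ) (i : ι) :
    e i ≤ ∑ j with g j = g i, e j :=
  Finset.single_le_sum (fun _ _ => Nat.zero_le _) (by simp)

theorem lt_and_sum_eq_of_sum_fiber_eq {g : ι → ℕ} {n : ℕ} (he : ∀ i, 0 < e i)
    (hg : ∀ k, ∑ i with g i = k, e i = if k < n then B else 0) :
    (∀ i, g i < n) ∧ ∑ i, e i = n * B := by
  have hlt : ∀ i, g i < n := by
    intro i
    by_contra hi
    have := le_sum_fiber e g i
    rw [hg, if_neg hi] at this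
    exact (he i).ne' (Nat.le_zero.1 this)
  refine ⟨hlt, ?_⟩
  rw [← Finset.sum_fiberwise_of_maps_to (t := Finset.range n) fun i _ => Finset.mem_range.2 (hlt i),
    Finset.sum_congr rfl fun k hk => (hg k).trans (if_pos (Finset.mem_range.1 hk)),
    Finset.sum_const, Finset.card_range, smul_eq_mul]

theorem exists_sum_fiber_eq_of_partition {m : ℕ} {part : Fin m → Finset ι}
    (hpart : ∀ j, ∑ i ∈ part j, e i = B) (hdisj : ∀ j k, j ≠ k → Disjoint (part j) (part k))
    (hcover : ∀ i, ∃ j, i ∈ part j) :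
    ∃ g : ι → ℕ, ∀ k, ∑ i with g i = k, e i = if k < m then B else 0 := by
  choose g hg using hcover
  refine ⟨fun i => g i, fun k => ?_⟩
  split_ifs with hk
  · rw [← hpart ⟨k, hk⟩]
    congr 1
    ext i
    simp only [Finset.mem_filter, Finset.mem_univ, true_and]
    refine ⟨fun h => (Fin.ext h : g i = ⟨k, hk⟩) ▸ hg i, fun hi => ?_⟩
    by_contra hne
    exact Finset.disjoint_left.1 (hdisj _ _ fun h => hne (congrArg Fin.val h)) (hg i) hi
  · exact Finset.sum_eq_zero fun i hi => absurd ((Finset.mem_filter.1 hi).2 ▸ (g i).isLt) hk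

end labelling

theorem card_eq_three_of_sum_eq {ι : Type*} {e : ι → ℕ} {B : ℕ} {T : Finset ι} (hB : 0 < B)
    (hT : ∑ i ∈ T, e i = B) (hlb : ∀ i ∈ T, B < 4 * e i) (hub : ∀ i ∈ T, 2 * e i < B) :
    T.card = 3 := by
  have hne : T.Nonempty := Finset.nonempty_of_sum_ne_zero (f := e) (by omega)
  have h4 : T.card * B < 4 * B := by
    simpa [← Finset.mul_sum, hT] using Finset.sum_lt_sum_of_nonempty hne hlb
  have h2 : 2 * B < T.card * B := by
    simpa [← Finset.mul_sum, hT] using Finset.sum_lt_sum_of_nonempty hne hub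
  have := Nat.lt_of_mul_lt_mul_right h4
  have := Nat.lt_of_mul_lt_mul_right h2
  omega

def block (x y : α) (e : ℕ) : List α := List.replicate e x ++ List.replicate e y

section block

variable {x y : α}

@[simp] theorem block_zero : block x y 0 = [] := rfl

theorem interleaving_block_add (p q : ℕ) :
    Interleaving (block x y p) (block x y q) (block x y (p + q)) := by
  rw [block, block, block, List.replicate_add, List.replicate_add]
  exact (Interleaving.append_left_right _ _).append (Interleaving.append_left_right _ _)

theorem block_sum_mem_shuffles : ∀ {n : ℕ} (c : Fin n → ℕ),
    block x y (∑ i, c i) ∈ Shuffles (List.ofFn fun i => block x y (c i))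
  | 0, _ => by simp [Shuffles]
  | _ + 1, c => by
    rw [Fin.sum_univ_castSucc]
    exact mem_shuffles_ofFn_succ.2 ⟨_, block_sum_mem_shuffles _, interleaving_block_add _ _⟩

variable [DecidableEq α]

theorem count_block_left (hxy : x ≠ y) (e : ℕ) : (block x y e).count x = e := by
  simp [block, List.count_replicate, hxy.symm]

theorem count_block_right (hxy : x ≠ y) (e : ℕ) : (block x y e).count y = e := by
  simp [block, List.count_replicate, hxy]

theorem count_le_count_of_append_eq_block (hxy : x ≠ y) {t s : List α} {e : ℕ}
    (h : t ++ s = block x y e) :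
    t.count y ≤ t.count x ∧ (t.count y = t.count x → t = [] ∨ s = []) := by
  rcases List.append_eq_append_iff.1 h with ⟨r, hr, -⟩ | ⟨r, rfl, hr⟩
  · obtain ⟨-, ht, -⟩ := List.append_eq_replicate_iff.1 hr.symm
    rw [ht]
    simp only [List.count_replicate, beq_iff_eq, hxy, if_false, if_true]
    exact ⟨Nat.zero_le _, fun h0 => Or.inl (by rw [← h0, List.replicate_zero])⟩
  · obtain ⟨hlen, hr, -⟩ := List.append_eq_replicate_iff.1 hr.symm
    rw [hr]
    simp only [List.count_append, List.count_replicate, beq_iff_eq, hxy, hxy.symm, if_false, if_true]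
    exact ⟨by omega, fun heq => Or.inr (List.length_eq_zero_iff.1 (by omega))⟩

/- Every piece `p i` is a prefix of its block and so has no more `y`s than `x`s; as `x^c y^c` has
equally many, each piece is balanced, hence empty or the whole block. -/
theorem eq_nil_or_eq_nil_of_block_mem_shuffles (hxy : x ≠ y) {n : ℕ} {e : Fin n → ℕ} {c : ℕ}
    {p s : Fin n → List α} (hps : ∀ i, p i ++ s i = block x y (e i))
    (hp : block x y c ∈ Shuffles (List.ofFn p)) (i : Fin n) : p i = [] ∨ s i = [] := by
  have hle : ∀ i, (p i).count y ≤ (p i).count x := fun i =>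
    (count_le_count_of_append_eq_block hxy (hps i)).1
  have hcount : ∑ i, (p i).count y = ∑ i, (p i).count x := by
    rw [← count_eq_sum_of_mem_shuffles y hp, ← count_eq_sum_of_mem_shuffles x hp,
      count_block_left hxy, count_block_right hxy]
  exact (count_le_count_of_append_eq_block hxy (hps i)).2
    ((Finset.sum_eq_sum_iff_of_le fun i _ => hle i).1 hcount i (Finset.mem_univ i))

theorem block_append_mem_shuffles_iff (hxy : x ≠ y) {n : ℕ} {e : Fin n → ℕ} {c : ℕ}
    {w : List α} :
    block x y c ++ w ∈ Shuffles (List.ofFn fun i => block x y (e i)) ↔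
      ∃ t : Finset (Fin n), ∑ i ∈ t, e i = c ∧
        w ∈ Shuffles (List.ofFn fun i => block x y (if i ∈ t then 0 else e i)) := by
  rw [append_mem_shuffles_ofFn_iff]
  constructor
  · rintro ⟨p, s, hps, hp, hw⟩
    have hsplit := eq_nil_or_eq_nil_of_block_mem_shuffles hxy hps hp
    set t := Finset.univ.filter fun i => s i = []
    have hpst : ∀ i, p i = block x y (if i ∈ t then e i else 0) ∧
        s i = block x y (if i ∈ t then 0 else e i) := by
      intro i
      by_cases hi : i ∈ t
      · have hsi : s i = [] := (Finset.mem_filter.1 hi).2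
        simp only [hi, if_true, block_zero]
        exact ⟨by rw [← hps i, hsi, List.append_nil], hsi⟩
      · have hpi : p i = [] := (hsplit i).resolve_right (by simpa [t] using hi)
        simp only [hi, if_false, block_zero]
        exact ⟨hpi, by rw [← hps i, hpi, List.nil_append]⟩
    refine ⟨t, ?_, by rwa [show s = _ from funext fun i => (hpst i).2] at hw⟩
    have hc := count_eq_sum_of_mem_shuffles x hp
    simp only [hpst, count_block_left hxy] at hc
    rw [hc, Finset.sum_ite_mem, Finset.univ_inter]
  · rintro ⟨t, rfl, hw⟩
    refine ⟨fun i => block x y (if i ∈ t then e i else 0), _, fun i => ?_, ?_, hw⟩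
    · by_cases hi : i ∈ t <;> simp [hi]
    · have := block_sum_mem_shuffles (x := x) (y := y) fun i => if i ∈ t then e i else 0
      rwa [Finset.sum_ite_mem, Finset.univ_inter] at this

theorem nil_mem_shuffles_block_iff (hxy : x ≠ y) {n : ℕ} {e : Fin n → ℕ} :
    [] ∈ Shuffles (List.ofFn fun i => block x y (e i)) ↔ e = 0 := by
  constructor
  · intro h
    have h0 := count_eq_sum_of_mem_shuffles x h
    simp only [List.count_nil, count_block_left hxy] at h0
    exact funext fun i => (Finset.sum_eq_zero_iff.1 h0.symm) i (Finset.mem_univ i)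
  · rintro rfl
    simpa using block_sum_mem_shuffles (x := x) (y := y) (0 : Fin n → ℕ)

/- Labels are natural numbers rather than elements of `Fin cs.length` because the induction
produces empty blocks (`e i = 0`), which must be labelled even when `cs = []`. -/
theorem flatten_map_block_mem_shuffles_iff (hxy : x ≠ y) :
    ∀ (cs : List ℕ) {n : ℕ} (e : Fin n → ℕ),
      (cs.map (block x y)).flatten ∈ Shuffles (List.ofFn fun i => block x y (e i)) ↔
        ∃ g : Fin n → ℕ, ∀ k, ∑ i with g i = k, e i = cs.getD k 0
  | [], n, e => by
    rw [List.map_nil, List.flatten_nil, nil_mem_shuffles_block_iff hxy]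
    constructor
    · rintro rfl
      exact ⟨0, fun k => by simp⟩
    · rintro ⟨g, hg⟩
      funext i
      have hi := le_sum_fiber e g i
      rw [hg, List.getD_nil] at hi
      exact Nat.le_zero.1 hi
  | c :: cs, n, e => by
    rw [List.map_cons, List.flatten_cons, block_append_mem_shuffles_iff hxy]
    simp_rw [flatten_map_block_mem_shuffles_iff hxy cs]
    constructor
    · rintro ⟨t, hc, g, hg⟩
      refine ⟨fun i => if i ∈ t then 0 else g i + 1, ?_⟩
      rintro (_ | k)
      · rw [List.getD_cons_zero, ← hc]
        congr 1
        ext i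
        by_cases hi : i ∈ t <;> simp [hi]
      · rw [List.getD_cons_succ, ← hg k, Finset.sum_filter, Finset.sum_filter]
        refine Finset.sum_congr rfl fun i _ => ?_
        by_cases hi : i ∈ t <;> simp [hi]
    · rintro ⟨g, hg⟩
      refine ⟨Finset.univ.filter (g · = 0), hg 0, fun i => g i - 1, fun k => ?_⟩
      rw [← List.getD_cons_succ (x := c), ← hg (k + 1), Finset.sum_filter, Finset.sum_filter]
      refine Finset.sum_congr rfl fun i _ => ?_
      simp only [Finset.mem_filter, Finset.mem_univ, true_and]
      by_cases hi : g i = 0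
      · simp [hi]
      · simp only [hi, if_false]
        exact if_congr (by omega) rfl rfl

theorem shuffles_inter_star_block_nonempty_iff (hxy : x ≠ y)
    {N : ℕ} (e : Fin N → ℕ) (B : ℕ) :
    (Shuffles (List.ofFn fun i => block x y (e i)) ∩ star (block x y B)).Nonempty ↔
      ∃ n, ∃ g : Fin N → ℕ, ∀ k, ∑ i with g i = k, e i = if k < n then B else 0 := by
  have hpow : ∀ n, wpow (block x y B) n = ((List.replicate n B).map (block x y)).flatten :=
    fun n => by rw [wpow_eq_flatten_replicate, List.map_replicate]
  simp only [← getD_replicate_eq_ite, ← flatten_map_block_mem_shuffles_iff hxy, ← hpow]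
  exact ⟨fun ⟨_, hw, n, hn⟩ => ⟨n, hn ▸ hw⟩, fun ⟨n, hn⟩ => ⟨_, hn, n, rfl⟩⟩

end block


theorem stmt2_general (m B : ℕ) (hB : 0 < B)
    (e : Fin (3 * m) → ℕ) (he : ∀ i, 0 < e i)
    (hlb : ∀ i, B < 4 * e i) (hub : ∀ i, 2 * e i < B)
    (hsum : ∑ i, e i = m * B) :
    (Shuffles (List.ofFn fun i =>
        List.replicate (e i) AB.a ++ List.replicate (e i) AB.b) ∩
      star (List.replicate B AB.a ++ List.replicate B AB.b)).Nonempty ↔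
    ∃ part : Fin m → Finset (Fin (3 * m)),
      (∀ j, (part j).card = 3) ∧
      (∀ j, ∑ i ∈ part j, e i = B) ∧
      (∀ j k, j ≠ k → Disjoint (part j) (part k)) ∧
      (∀ i, ∃ j, i ∈ part j) := by
  refine (shuffles_inter_star_block_nonempty_iff (nofun : AB.a ≠ AB.b) e B).trans ⟨?_, ?_⟩
  · rintro ⟨n, g, hg⟩
    obtain ⟨hlt, hnB⟩ := lt_and_sum_eq_of_sum_fiber_eq he hg
    obtain rfl : n = m := Nat.eq_of_mul_eq_mul_right hB (hnB.symm.trans hsum)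
    have hpart : ∀ j : Fin n, ∑ i with g i = j, e i = B := fun j => (hg j).trans (if_pos j.isLt)
    exact ⟨fun j => {i | g i = j},
      fun j => card_eq_three_of_sum_eq hB (hpart j) (fun i _ => hlb i) (fun i _ => hub i), hpart,
      fun j k hjk => Finset.disjoint_filter.2 fun i _ hj hk => hjk (Fin.ext (hj.symm.trans hk)),
      fun i => ⟨⟨g i, hlt i⟩, by simp⟩⟩
  · rintro ⟨part, -, hpart, hdisj, hcover⟩
    exact ⟨m, exists_sum_fiber_eq_of_partition hpart hdisj hcover⟩

/-- correctness of the reduction from UNARY-3-PARTITION: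
with `sᵢ = a^{eᵢ} b^{eᵢ}`, the tuple `(s₁, …, s₃ₘ)` has a shuffle in `(a^B b^B)^*`
iff the indices can be partitioned into `m` triples each summing to `B`. -/
theorem stmt2 (m B : ℕ) (hm : 0 < m) (hB : 0 < B)
    (e : Fin (3 * m) → ℕ) (he : ∀ i, 0 < e i)
    (hlb : ∀ i, B < 4 * e i) (hub : ∀ i, 2 * e i < B)
    (hsum : ∑ i, e i = m * B) :
    (Shuffles (List.ofFn fun i =>
        List.replicate (e i) AB.a ++ List.replicate (e i) AB.b) ∩
      star (List.replicate B AB.a ++ List.replicate B AB.b)).Nonempty ↔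
    ∃ part : Fin m → Finset (Fin (3 * m)),
      (∀ j, (part j).card = 3) ∧
      (∀ j, ∑ i ∈ part j, e i = B) ∧
      (∀ j k, j ≠ k → Disjoint (part j) (part k)) ∧
      (∀ i, ∃ j, i ∈ part j) :=
  stmt2_general m B hB e he hlb hub hsum

end CTS
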